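/- Assume the group Γ is finitely generated. Then for every ℂ[Γ]-module W, every q ≥ 0 and every w ∈ H⁰_{q,P}(Γ,W), the cyclic submodule ℂ[Γ]·w is a finite-dimensional complex vector space. -/

import Mathlib

/-!
If `S` is a finite set generating `Γ` as a monoid, the elements `γ - 1` (`γ ∈ S`) lie in `I_Γ`
and generate `ℂ[Γ]` as a `ℂ`-algebra. Since `I_Γ^{q+1}` kills `w`, the finitely many vectors
`(γ₁ - 1) ⋯ (γₖ - 1) • w` with `k ≤ q` and `γᵢ ∈ S` span a subspace that contains `w` and is
stable under these algebra generators, hence contains `ℂ[Γ] • w`.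
-/

/-- The augmentation homomorphism `ℂ[Γ] → ℂ`, sending `∑ c_γ γ` to `∑ c_γ`. -/
noncomputable def aug (Γ : Type*) [Group Γ] : MonoidAlgebra ℂ Γ →ₐ[ℂ] ℂ :=
  MonoidAlgebra.lift ℂ ℂ Γ 1

/-- The augmentation ideal `I_Γ`, the kernel of the augmentation homomorphism. -/
noncomputable def augIdeal (Γ : Type*) [Group Γ] : Ideal (MonoidAlgebra ℂ Γ) :=
  RingHom.ker (aug Γ).toRingHom

/-- The space `H⁰_{q,P}(Γ,W) = {w ∈ W : J_{q+1} w = 0}` of invariants of type `P` and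
order `q`. -/
def Hset (Γ : Type*) [Group Γ] (P : Subgroup Γ) (W : Type*) [AddCommGroup W]
    [Module (MonoidAlgebra ℂ Γ) W] (q : ℕ) : Set W :=
  {w | (∀ x : Fin (q + 1) → MonoidAlgebra ℂ Γ,
          (∀ i, x i ∈ augIdeal Γ) → (List.ofFn x).prod • w = 0) ∧
        ∀ p : Γ, p ∈ P → (MonoidAlgebra.of ℂ Γ p) • w = w}

section

variable {K A M : Type*} [Field K] [Semiring A] [Algebra K A] [AddCommGroup M] [Module K M]
  [Module A M] [IsScalarTower K A M] {s : Set A}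

theorem Submodule.restrictScalars_span_singleton_le_of_smul_mem (hs : Algebra.adjoin K s = ⊤)
    {V : Submodule K M} (hV : ∀ a ∈ s, ∀ v ∈ V, a • v ∈ V) {w : M} (hw : w ∈ V) :
    (Submodule.span A {w}).restrictScalars K ≤ V := by
  have smul_mem : ∀ x : A, ∀ v ∈ V, x • v ∈ V := by
    intro x
    induction (hs ▸ Algebra.mem_top : x ∈ Algebra.adjoin K s) using Algebra.adjoin_induction with
    | mem a ha => exact hV a ha
    | algebraMap r => intro v hv; rw [algebraMap_smul]; exact V.smul_mem r hv
    | add x y _ _ hx hy => intro v hv; rw [add_smul]; exact V.add_mem (hx v hv) (hy v hv)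
    | mul x y _ _ hx hy => intro v hv; rw [mul_smul]; exact hx _ (hy v hv)
  rintro _ hv
  obtain ⟨x, rfl⟩ := Submodule.mem_span_singleton.mp hv
  exact smul_mem x w hw

theorem finiteDimensional_span_singleton_of_prod_smul_eq_zero (hs_fin : s.Finite)
    (hs : Algebra.adjoin K s = ⊤) {q : ℕ} {w : M}
    (hw : ∀ l : List A, (∀ a ∈ l, a ∈ s) → l.length = q + 1 → l.prod • w = 0) :
    FiniteDimensional K ((Submodule.span A {w}).restrictScalars K) := by
  have := hs_fin.to_subtype
  let word : List s → M := fun l => (l.map Subtype.val).prod • w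
  let V := Submodule.span K (word '' {l | l.length ≤ q})
  have : FiniteDimensional K V :=
    Module.Finite.span_of_finite K ((List.finite_length_le s q).image word)
  have hV : ∀ a ∈ s, ∀ v ∈ V, a • v ∈ V := by
    intro a ha v hv
    induction hv using Submodule.span_induction with
    | mem v hv =>
      obtain ⟨l, hl, rfl⟩ := hv
      have : a • word l = word (⟨a, ha⟩ :: l) := by simp [word, mul_smul]
      rw [this]
      rcases Nat.lt_or_eq_of_le hl with hlt | rfl
      · exact Submodule.subset_span ⟨_, Nat.succ_le_of_lt hlt, rfl⟩
      · rw [show word (⟨a, ha⟩ :: l) = 0 from hw _ (by simp +contextual [ha]) (by simp)]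
        exact V.zero_mem
    | zero => rw [smul_zero]; exact V.zero_mem
    | add x y _ _ hx hy => rw [smul_add]; exact V.add_mem hx hy
    | smul r x _ hx => rw [smul_comm]; exact V.smul_mem r hx
  have hwV : w ∈ V := Submodule.subset_span ⟨[], Nat.zero_le q, by simp [word]⟩
  exact Submodule.finiteDimensional_of_le
    (Submodule.restrictScalars_span_singleton_le_of_smul_mem hs hV hwV)

end

theorem MonoidAlgebra.adjoin_image_of_sub_one_eq_top {k G : Type*} [CommRing k] [Monoid G]
    {S : Set G} (hS : Submonoid.closure S = ⊤) :
    Algebra.adjoin k ((fun g => of k G g - 1) '' S) = ⊤ := by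
  set B := Algebra.adjoin k ((fun g => of k G g - 1) '' S)
  have of_mem : ∀ g, of k G g ∈ B := by
    suffices Submonoid.closure S ≤ B.toSubmonoid.comap (of k G) from fun g ↦ this (hS ▸ trivial)
    refine Submonoid.closure_le.mpr fun g hg ↦ ?_
    change of k G g ∈ B
    rw [← sub_add_cancel (of k G g) 1]
    exact B.add_mem (Algebra.subset_adjoin ⟨g, hg, rfl⟩) B.one_mem
  refine Algebra.eq_top_iff.mpr fun x ↦ ?_
  induction x using MonoidAlgebra.induction_on with
  | of g => exact of_mem g
  | add x y hx hy => exact B.add_mem hx hy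
  | smul r x hx => exact B.smul_mem hx r

lemma of_sub_one_mem_augIdeal {Γ : Type*} [Group Γ] (γ : Γ) :
    MonoidAlgebra.of ℂ Γ γ - 1 ∈ augIdeal Γ := by
  simp [augIdeal, aug, RingHom.mem_ker]

theorem stmt2 (Γ : Type*) [Group Γ] (P : Subgroup Γ) (hΓ : Group.FG Γ)
    (W : Type*) [AddCommGroup W] [Module (MonoidAlgebra ℂ Γ) W]
    [Module ℂ W] [IsScalarTower ℂ (MonoidAlgebra ℂ Γ) W]
    (q : ℕ) (w : W) (hw : w ∈ Hset Γ P W q) :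
    FiniteDimensional ℂ
      ((Submodule.span (MonoidAlgebra ℂ Γ) {w}).restrictScalars ℂ) := by
  obtain ⟨S, hS⟩ := (Group.fg_iff_monoid_fg.mp hΓ).fg_top
  refine finiteDimensional_span_singleton_of_prod_smul_eq_zero (S.finite_toSet.image _)
    (MonoidAlgebra.adjoin_image_of_sub_one_eq_top hS) (q := q) fun l hl hlen ↦ ?_
  rw [← List.ofFn_getElem (xs := l), List.ofFn_congr hlen]
  refine hw.1 _ fun i ↦ ?_
  obtain ⟨γ, -, hγ⟩ := hl _ (List.getElem_mem _)
  exact hγ ▸ of_sub_one_mem_augIdeal γ
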